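/- Run HPMD with parameters satisfying 1 + η_k·τ_k = 1/γ and η_k = γ^{−2(k+1)}. Then for every k ≥ 1: f(π_k) − f(π*) ≤ γ^k · ( f(π_0) − f(π*) + 4·log|A|/(1−γ) ). -/

import Mathlib

/-- A probability distribution on a finite set: nonnegative and sums to 1. -/
def IsDist {A : Type*} [Fintype A] (p : A → ℝ) : Prop :=
  (∀ a, 0 ≤ p a) ∧ ∑ a, p a = 1

/-- A (randomized, stationary) policy. -/
def IsPolicy {S A : Type*} [Fintype A] (π : S → A → ℝ) : Prop :=
  ∀ s, IsDist (π s)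

/-- Kullback–Leibler divergence on a finite set (0·log 0 = 0). -/
noncomputable def KL {A : Type*} [Fintype A] (p q : A → ℝ) : ℝ :=
  ∑ a, p a * Real.log (p a / q a)

/-- The Q-function induced by a value function `V`. -/
noncomputable def Qf {S A : Type*} [Fintype S] (γ : ℝ) (c : S → A → ℝ)
    (P : S → A → S → ℝ) (V : S → ℝ) (s : S) (a : A) : ℝ :=
  c s a + γ * ∑ s', P s a s' * V s'

section KLlem
variable {A : Type*} [Fintype A]

lemma mul_log_div_expand {p q : ℝ} (hp : 0 ≤ p) (hq : 0 < q) :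
    p * Real.log (p / q) = p * Real.log p - p * Real.log q := by
  rcases eq_or_lt_of_le hp with h | h
  · simp [← h]
  · rw [Real.log_div h.ne' hq.ne']; ring

lemma sub_le_mul_log_div {p q : ℝ} (hp : 0 ≤ p) (hq : 0 < q) :
    p - q ≤ p * Real.log (p / q) := by
  rcases eq_or_lt_of_le hp with h | h
  · simp [← h]; linarith
  · have h1 : Real.log (q / p) ≤ q / p - 1 := Real.log_le_sub_one_of_pos (by positivity)
    have h2 : Real.log (q / p) = - Real.log (p / q) := by
      rw [← Real.log_inv]; congr 1; field_simp
    have h3 : p * (q / p - 1) = q - p := by field_simp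
    have h4 := mul_le_mul_of_nonneg_left h1 hp
    rw [h2, h3] at h4; linarith

lemma sub_lt_mul_log_div {p q : ℝ} (hp : 0 ≤ p) (hq : 0 < q) (hne : p ≠ q) :
    p - q < p * Real.log (p / q) := by
  rcases eq_or_lt_of_le hp with h | h
  · simp [← h]; linarith
  · have hq1 : q / p ≠ 1 := by
      intro hc; apply hne; field_simp at hc; linarith
    have h1 : Real.log (q / p) < q / p - 1 := Real.log_lt_sub_one_of_pos (by positivity) hq1
    have h2 : Real.log (q / p) = - Real.log (p / q) := by
      rw [← Real.log_inv]; congr 1; field_simp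
    have h3 : p * (q / p - 1) = q - p := by field_simp
    have h4 := mul_lt_mul_of_pos_left h1 h
    rw [h2, h3] at h4; linarith

lemma KL_nonneg {p q : A → ℝ} (hp : IsDist p) (hq : IsDist q) (hqpos : ∀ a, 0 < q a) :
    0 ≤ KL p q := by
  have : ∑ a, (p a - q a) ≤ KL p q :=
    Finset.sum_le_sum fun a _ => sub_le_mul_log_div (hp.1 a) (hqpos a)
  rw [Finset.sum_sub_distrib, hp.2, hq.2] at this
  linarith

lemma KL_eq_of_nonpos {p q : A → ℝ} (hp : IsDist p) (hq : IsDist q) (hqpos : ∀ a, 0 < q a)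
    (h : KL p q ≤ 0) : p = q := by
  by_contra hne
  have ⟨a, ha⟩ : ∃ a, p a ≠ q a := by
    by_contra hc; push_neg at hc; exact hne (funext hc)
  have : ∑ a, (p a - q a) < KL p q :=
    Finset.sum_lt_sum (fun a _ => sub_le_mul_log_div (hp.1 a) (hqpos a))
      ⟨a, Finset.mem_univ a, sub_lt_mul_log_div (hp.1 a) (hqpos a) ha⟩
  rw [Finset.sum_sub_distrib, hp.2, hq.2] at this
  linarith

lemma KL_self {q : A → ℝ} (hqpos : ∀ a, 0 < q a) : KL q q = 0 := by
  unfold KL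
  apply Finset.sum_eq_zero
  intro a _
  rw [div_self (hqpos a).ne']
  simp

lemma KL_expand {p q : A → ℝ} (hp : ∀ a, 0 ≤ p a) (hqpos : ∀ a, 0 < q a) :
    KL p q = ∑ a, p a * Real.log (p a) - ∑ a, p a * Real.log (q a) := by
  unfold KL
  rw [← Finset.sum_sub_distrib]
  exact Finset.sum_congr rfl fun a _ => mul_log_div_expand (hp a) (hqpos a)

lemma negent_nonpos {p : A → ℝ} (hp : IsDist p) : ∑ a, p a * Real.log (p a) ≤ 0 := by
  apply Finset.sum_nonpos
  intro a _
  rcases eq_or_lt_of_le (hp.1 a) with h | h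
  · simp [← h]
  · have hle : p a ≤ 1 := by
      rw [← hp.2]; exact Finset.single_le_sum (fun i _ => hp.1 i) (Finset.mem_univ a)
    have := Real.log_nonpos (hp.1 a) hle
    exact mul_nonpos_of_nonneg_of_nonpos (hp.1 a) this

lemma KL_uniform_le [Nonempty A] {p : A → ℝ} (hp : IsDist p) :
    KL p (fun _ => 1 / (Fintype.card A : ℝ)) ≤ Real.log (Fintype.card A : ℝ) := by
  have hcard : (0:ℝ) < (Fintype.card A : ℝ) := by
    exact_mod_cast Fintype.card_pos
  rw [KL_expand hp.1 (fun _ => by positivity)]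
  have : ∑ a, p a * Real.log (1 / (Fintype.card A : ℝ))
      = - Real.log (Fintype.card A : ℝ) := by
    rw [← Finset.sum_mul, hp.2, one_mul, one_div, Real.log_inv]
  rw [this]
  have := negent_nonpos hp
  linarith

end KLlem

section Softmax
variable {A : Type*} [Fintype A] [Nonempty A]

lemma softmax_ident (γ : ℝ) (hγ : 0 < γ) (ℓ : A → ℝ) :
    ∃ z : A → ℝ, IsDist z ∧ (∀ a, 0 < z a) ∧ ∃ C : ℝ, ∀ p : A → ℝ, IsDist p →
      (∑ a, p a * ℓ a) + γ⁻¹ * ∑ a, p a * Real.log (p a) = γ⁻¹ * KL p z + C := by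
  set Z : ℝ := ∑ a, Real.exp (-(γ * ℓ a)) with hZ
  have hZpos : 0 < Z := Finset.sum_pos (fun a _ => Real.exp_pos _) Finset.univ_nonempty
  refine ⟨fun a => Real.exp (-(γ * ℓ a)) / Z, ⟨fun a => by positivity, ?_⟩,
    fun a => by positivity, -γ⁻¹ * Real.log Z, ?_⟩
  · rw [← Finset.sum_div, ← hZ, div_self hZpos.ne']
  · intro p hp
    have hlogz : ∀ a, Real.log (Real.exp (-(γ * ℓ a)) / Z) = -(γ * ℓ a) - Real.log Z := by
      intro a
      rw [Real.log_div (Real.exp_pos _).ne' hZpos.ne', Real.log_exp]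
    rw [KL_expand hp.1 (fun a => by positivity)]
    have h2 : ∑ a, p a * Real.log (Real.exp (-(γ * ℓ a)) / Z)
        = -γ * (∑ a, p a * ℓ a) - Real.log Z := by
      rw [show -γ * (∑ a, p a * ℓ a) - Real.log Z
          = ∑ a, (-γ * (p a * ℓ a)) - (∑ a, p a) * Real.log Z by
            rw [hp.2, one_mul, Finset.mul_sum]
         , Finset.sum_mul, ← Finset.sum_sub_distrib]
      exact Finset.sum_congr rfl fun a _ => by rw [hlogz a]; ring
    rw [h2]
    have hγ' : γ⁻¹ * γ = 1 := inv_mul_cancel₀ hγ.ne'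
    field_simp
    ring
end Softmax

section Step
variable {A : Type*} [Fintype A] [Nonempty A]

/-- Per-state prox-step lemma: the minimizer is positive and satisfies an exact
three-point identity. -/
lemma prox_step (γ : ℝ) (hγ : 0 < γ) (η τ : ℝ) (hpar : 1 + η * τ = 1 / γ)
    (Q : A → ℝ) (q0 qk q' : A → ℝ) (hq0 : IsDist q0) (hq0p : ∀ a, 0 < q0 a)
    (hqk : IsDist qk) (hqkp : ∀ a, 0 < qk a) (hq' : IsDist q')
    (hmin : ∀ p : A → ℝ, IsDist p →
      η * ((∑ a, Q a * q' a) + τ * KL q' q0) + KL q' qk ≤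
      η * ((∑ a, Q a * p a) + τ * KL p q0) + KL p qk) :
    (∀ a, 0 < q' a) ∧ ∀ p : A → ℝ, IsDist p →
      η * ((∑ a, Q a * q' a) + τ * KL q' q0) + KL q' qk + γ⁻¹ * KL p q' =
      η * ((∑ a, Q a * p a) + τ * KL p q0) + KL p qk := by
  set ℓ : A → ℝ := fun a => η * Q a - η * τ * Real.log (q0 a) - Real.log (qk a) with hℓ
  obtain ⟨z, hz, hzpos, C, hC⟩ := softmax_ident γ hγ ℓ
  have hF : ∀ p : A → ℝ, IsDist p →
      η * ((∑ a, Q a * p a) + τ * KL p q0) + KL p qk = γ⁻¹ * KL p z + C := by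
    intro p hp
    rw [← hC p hp, KL_expand hp.1 hq0p, KL_expand hp.1 hqkp]
    have hγinv : γ⁻¹ = 1 + η * τ := by rw [hpar, one_div]
    rw [hγinv]
    simp only [hℓ]
    rw [Finset.mul_sum]
    simp only [mul_sub, sub_mul, Finset.sum_sub_distrib]
    have hQ : ∑ a, p a * (η * Q a) = η * ∑ a, Q a * p a := by
      rw [Finset.mul_sum]; exact Finset.sum_congr rfl fun a _ => by ring
    have h0 : ∑ a, p a * (η * τ * Real.log (q0 a)) = η * τ * ∑ a, p a * Real.log (q0 a) := by
      rw [Finset.mul_sum]; exact Finset.sum_congr rfl fun a _ => by ring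
    rw [hQ, h0]
    have h3 : ∑ x, (1 + η * τ) * (p x * Real.log (p x))
        = (1 + η * τ) * ∑ x, p x * Real.log (p x) := by
      rw [Finset.mul_sum]
    rw [h3]
    ring
  -- q' = z
  have h1 := hmin z hz
  rw [hF z hz, hF q' hq', KL_self hzpos] at h1
  have hγinv : (0:ℝ) < γ⁻¹ := by positivity
  have hKLz : KL q' z ≤ 0 := by
    have h2 : γ⁻¹ * KL q' z ≤ 0 := by linarith
    by_contra hc; push_neg at hc; nlinarith
  have hqz : q' = z := KL_eq_of_nonpos hq' hz hzpos hKLz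
  subst hqz
  refine ⟨hzpos, fun p hp => ?_⟩
  rw [hF p hp, hF q' hq', KL_self hzpos]
  ring
end Step

section MDP
variable {S A : Type*} [Fintype S] [Nonempty S] [Fintype A] [Nonempty A]

lemma wavg_le {w x : A → ℝ} (hw : IsDist w) {M : ℝ} (hx : ∀ a, x a ≤ M) :
    ∑ a, w a * x a ≤ M := by
  calc ∑ a, w a * x a ≤ ∑ a, w a * M :=
        Finset.sum_le_sum fun a _ => mul_le_mul_of_nonneg_left (hx a) (hw.1 a)
    _ = M := by rw [← Finset.sum_mul, hw.2, one_mul]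

/-- stationarity: averaging a one-step lookahead under the stationary distribution. -/
lemma stat_avg (ν : S → ℝ) (πs : S → A → ℝ) (P : S → A → S → ℝ)
    (hνstat : ∀ s', ν s' = ∑ s, ν s * ∑ a, πs s a * P s a s') (W : S → ℝ) :
    ∑ s, ν s * ∑ a, πs s a * ∑ s', P s a s' * W s' = ∑ s', ν s' * W s' := by
  have key : ∀ s a, πs s a * ∑ s', P s a s' * W s' = ∑ s', πs s a * P s a s' * W s' := by
    intro s a
    rw [Finset.mul_sum]
    exact Finset.sum_congr rfl fun s' _ => by ring
  calc ∑ s, ν s * ∑ a, πs s a * ∑ s', P s a s' * W s'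
      = ∑ s, ∑ a, ∑ s', ν s * (πs s a * P s a s' * W s') := by
        refine Finset.sum_congr rfl fun s _ => ?_
        rw [Finset.mul_sum]
        refine Finset.sum_congr rfl fun a _ => ?_
        rw [key s a, Finset.mul_sum]
    _ = ∑ s, ∑ s', ∑ a, ν s * (πs s a * P s a s' * W s') :=
        Finset.sum_congr rfl fun s _ => Finset.sum_comm
    _ = ∑ s', ∑ s, ∑ a, ν s * (πs s a * P s a s' * W s') := Finset.sum_comm
    _ = ∑ s', (∑ s, ν s * ∑ a, πs s a * P s a s') * W s' := by
        refine Finset.sum_congr rfl fun s' _ => ?_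
        rw [Finset.sum_mul]
        refine Finset.sum_congr rfl fun s _ => ?_
        rw [Finset.mul_sum, Finset.sum_mul]
        exact Finset.sum_congr rfl fun a _ => by ring
    _ = ∑ s', ν s' * W s' := Finset.sum_congr rfl fun s' _ => by rw [← hνstat s']

/-- sup-norm style bound: if W = b + γ P_π W pointwise and b ≤ δ, then
ν·W ≤ ν·b + γδ/(1-γ). -/
lemma sup_bound (γ : ℝ) (hγ0 : 0 < γ) (hγ1 : γ < 1)
    (w : S → A → ℝ) (hw : IsPolicy w) (P : S → A → S → ℝ) (hP : ∀ s a, IsDist (P s a))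
    (ν : S → ℝ) (hν : IsDist ν) (W b : S → ℝ) (δ : ℝ)
    (hW : ∀ s, W s = b s + γ * ∑ a, w s a * ∑ s', P s a s' * W s')
    (hb : ∀ s, b s ≤ δ) :
    ∑ s, ν s * W s ≤ (∑ s, ν s * b s) + γ * δ / (1 - γ) := by
  obtain ⟨s0, -, hs0⟩ := Finset.exists_max_image Finset.univ W Finset.univ_nonempty
  set M := W s0 with hM
  have hWle : ∀ s, W s ≤ M := fun s => hs0 s (Finset.mem_univ s)
  have hstep : ∀ s, W s ≤ b s + γ * M := by
    intro s
    have hinner : ∀ a, ∑ s', P s a s' * W s' ≤ M :=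
      fun a => wavg_le (hP s a) hWle
    have h2 : ∑ a, w s a * ∑ s', P s a s' * W s' ≤ M := wavg_le (hw s) hinner
    rw [hW s]
    nlinarith
  have hMδ : M ≤ δ / (1 - γ) := by
    have := hstep s0
    have hb0 := hb s0
    rw [← hM] at this
    rw [le_div_iff₀ (by linarith : (0:ℝ) < 1 - γ)]
    nlinarith
  calc ∑ s, ν s * W s ≤ ∑ s, ν s * (b s + γ * M) :=
        Finset.sum_le_sum fun s _ => mul_le_mul_of_nonneg_left (hstep s) (hν.1 s)
    _ = (∑ s, ν s * b s) + γ * M := by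
        simp only [mul_add]
        rw [Finset.sum_add_distrib, ← Finset.sum_mul, hν.2]
        ring
    _ ≤ (∑ s, ν s * b s) + γ * δ / (1 - γ) := by
        have : γ * M ≤ γ * (δ / (1 - γ)) := mul_le_mul_of_nonneg_left hMδ hγ0.le
        rw [mul_div_assoc]
        linarith
end MDP

section MDP2
variable {S A : Type*} [Fintype S] [Nonempty S] [Fintype A] [Nonempty A]

lemma value_diff (γ : ℝ) (c : S → A → ℝ) (P : S → A → S → ℝ)
    (V1 V2 : S → ℝ) (w : S → A → ℝ)
    (h1 : ∀ s, V1 s = ∑ a, w s a * Qf γ c P V1 s a) :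
    ∀ s, V1 s - V2 s = ((∑ a, Qf γ c P V2 s a * w s a) - V2 s)
        + γ * ∑ a, w s a * ∑ s', P s a s' * (V1 s' - V2 s') := by
  intro s
  rw [h1 s]
  simp only [Qf]
  have key : ∀ a, w s a * (c s a + γ * ∑ s', P s a s' * V1 s')
      = (c s a + γ * ∑ s', P s a s' * V2 s') * w s a
        + γ * (w s a * ∑ s', P s a s' * (V1 s' - V2 s')) := by
    intro a
    have h2 : ∑ s', P s a s' * (V1 s' - V2 s')
        = (∑ s', P s a s' * V1 s') - ∑ s', P s a s' * V2 s' := by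
      rw [← Finset.sum_sub_distrib]
      exact Finset.sum_congr rfl fun s' _ => by ring
    rw [h2]; ring
  rw [Finset.sum_congr rfl fun a _ => key a, Finset.sum_add_distrib, ← Finset.mul_sum]
  ring

lemma pdl_stat (γ : ℝ) (c : S → A → ℝ) (P : S → A → S → ℝ)
    (ν : S → ℝ) (πs : S → A → ℝ)
    (hνstat : ∀ s', ν s' = ∑ s, ν s * ∑ a, πs s a * P s a s')
    (Vs : S → ℝ) (hVs : ∀ s, Vs s = ∑ a, πs s a * Qf γ c P Vs s a)
    (W : S → ℝ) :
    ∑ s, ν s * ∑ a, πs s a * Qf γ c P W s a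
      = (1 - γ) * (∑ s, ν s * Vs s) + γ * ∑ s, ν s * W s := by
  have h1 : ∀ W' : S → ℝ, ∑ s, ν s * ∑ a, πs s a * Qf γ c P W' s a
      = (∑ s, ν s * ∑ a, πs s a * c s a) + γ * ∑ s', ν s' * W' s' := by
    intro W'
    have hinner : ∀ s, ∑ a, πs s a * Qf γ c P W' s a
        = (∑ a, πs s a * c s a) + γ * ∑ a, πs s a * ∑ s', P s a s' * W' s' := by
      intro s
      simp only [Qf, mul_add, Finset.sum_add_distrib]
      congr 1
      rw [Finset.mul_sum]
      exact Finset.sum_congr rfl fun a _ => by ring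
    calc ∑ s, ν s * ∑ a, πs s a * Qf γ c P W' s a
        = ∑ s, (ν s * ∑ a, πs s a * c s a
            + γ * (ν s * ∑ a, πs s a * ∑ s', P s a s' * W' s')) := by
          refine Finset.sum_congr rfl fun s _ => ?_
          rw [hinner s]; ring
      _ = (∑ s, ν s * ∑ a, πs s a * c s a)
            + γ * ∑ s, ν s * ∑ a, πs s a * ∑ s', P s a s' * W' s' := by
          rw [Finset.sum_add_distrib, Finset.mul_sum]
      _ = (∑ s, ν s * ∑ a, πs s a * c s a) + γ * ∑ s', ν s' * W' s' := by
          rw [stat_avg ν πs P hνstat W']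
  have h2 := h1 Vs
  have h3 : ∑ s, ν s * Vs s = ∑ s, ν s * ∑ a, πs s a * Qf γ c P Vs s a :=
    Finset.sum_congr rfl fun s _ => by rw [← hVs s]
  rw [h1 W]
  rw [← h3] at h2
  linarith

end MDP2

/-- linear convergence of HPMD (Theorem 2): with 1 + η_k τ_k = 1/γ and
η_k = γ^{−2(k+1)}. -/
theorem stmt5 {S A : Type*} [Fintype S] [Nonempty S] [Fintype A] [Nonempty A]
    (γ : ℝ) (hγ : 0 < γ ∧ γ < 1)
    (c : S → A → ℝ) (P : S → A → S → ℝ) (hP : ∀ s a, IsDist (P s a))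
    (V : (S → A → ℝ) → S → ℝ)
    (hV : ∀ π, IsPolicy π → ∀ s, V π s = ∑ a, π s a * Qf γ c P (V π) s a)
    (πstar : S → A → ℝ) (hπstar : IsPolicy πstar)
    (hoptimal : ∀ π', IsPolicy π' → ∀ s, V πstar s ≤ V π' s)
    (ν : S → ℝ) (hν : IsDist ν) (hνpos : ∀ s, 0 < ν s)
    (hνstat : ∀ s', ν s' = ∑ s, ν s * ∑ a, πstar s a * P s a s')
    -- HPMD parameters: 1 + η_k τ_k = 1/γ and η_k = γ^{−2(k+1)}
    (η τ : ℕ → ℝ)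
    (hparam : ∀ k, 1 + η k * τ k = 1 / γ)
    (hηdef : ∀ k, η k = γ ^ (-(2 * ((k : ℤ) + 1))))
    -- HPMD iterates
    (π : ℕ → S → A → ℝ) (hpol : ∀ k, IsPolicy (π k))
    (hinit : ∀ s a, π 0 s a = 1 / (Fintype.card A : ℝ))
    (hstep : ∀ k s, ∀ p : A → ℝ, IsDist p →
      η k * ((∑ a, Qf γ c P (V (π k)) s a * π (k+1) s a) + τ k * KL (π (k+1) s) (π 0 s))
          + KL (π (k+1) s) (π k s) ≤
      η k * ((∑ a, Qf γ c P (V (π k)) s a * p a) + τ k * KL p (π 0 s)) + KL p (π k s)) :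
    ∀ k : ℕ, 1 ≤ k →
      (∑ s, ν s * V (π k) s) - (∑ s, ν s * V πstar s) ≤
        γ ^ k * ((∑ s, ν s * V (π 0) s) - (∑ s, ν s * V πstar s)
          + 4 * Real.log (Fintype.card A : ℝ) / (1 - γ)) := by
  obtain ⟨hγ0, hγ1⟩ := hγ
  have h1γ : (0:ℝ) < 1 - γ := by linarith
  have hγne : γ ≠ 0 := ne_of_gt hγ0
  have h1γne : (1:ℝ) - γ ≠ 0 := by intro h; rw [sub_eq_zero] at h; exact absurd h.symm (ne_of_lt hγ1)
  have hcard0 : (0:ℝ) < (Fintype.card A : ℝ) := by exact_mod_cast Fintype.card_pos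
  set L : ℝ := Real.log (Fintype.card A : ℝ) with hLdef
  have hL0 : 0 ≤ L := Real.log_nonneg (by exact_mod_cast Fintype.card_pos)
  have hπ0u : ∀ s, π 0 s = fun _ => 1 / (Fintype.card A : ℝ) :=
    fun s => funext fun a => hinit s a
  have hπ0pos : ∀ s a, (0:ℝ) < π 0 s a := by
    intro s a; rw [hinit s a]; exact div_pos one_pos hcard0
  -- parameters
  have hθ : ∀ k, η k = (γ ^ (2*k+2) : ℝ)⁻¹ := by
    intro k
    rw [hηdef k, show (-(2 * ((k : ℤ) + 1))) = -((2*k+2 : ℕ) : ℤ) by push_cast; ring,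
      zpow_neg, zpow_natCast]
  have hηpos : ∀ k, 0 < η k := fun k => by rw [hθ k]; exact inv_pos.mpr (pow_pos hγ0 _)
  have hθη : ∀ k, γ ^ (2*k+2) * η k = 1 := by
    intro k; rw [hθ k]; exact mul_inv_cancel₀ (pow_pos hγ0 _).ne'
  have hητ : ∀ k, η k * τ k = 1/γ - 1 := fun k => by have := hparam k; linarith
  have hτval : ∀ k, τ k = (1/γ - 1) * γ ^ (2*k+2) := by
    intro k
    have h := hητ k
    rw [hθ k] at h
    have hpn : (γ:ℝ) ^ (2*k+2) ≠ 0 := (pow_pos hγ0 _).ne'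
    field_simp at h ⊢
    linarith
  have hτ0 : ∀ k, 0 ≤ τ k := by
    intro k
    rw [hτval k]
    have hg : (0:ℝ) ≤ 1/γ - 1 := by
      have := one_le_one_div hγ0 hγ1.le
      linarith
    exact mul_nonneg hg (pow_pos hγ0 _).le
  -- positivity of iterates
  have hpos : ∀ k, ∀ s a, 0 < π k s a := by
    intro k
    induction k with
    | zero => exact hπ0pos
    | succ n ih =>
      intro s
      exact (prox_step γ hγ0 (η n) (τ n) (hparam n)
        (fun a => Qf γ c P (V (π n)) s a) (π 0 s) (π n s) (π (n+1) s)
        (hpol 0 s) (fun a => hπ0pos s a) (hpol n s) (ih s) (hpol (n+1) s)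
        (fun p hp => hstep n s p hp)).1
  -- exact three-point identity
  have eq7 : ∀ k s, ∀ p : A → ℝ, IsDist p →
      η k * ((∑ a, Qf γ c P (V (π k)) s a * π (k+1) s a) + τ k * KL (π (k+1) s) (π 0 s))
        + KL (π (k+1) s) (π k s) + γ⁻¹ * KL p (π (k+1) s)
      = η k * ((∑ a, Qf γ c P (V (π k)) s a * p a) + τ k * KL p (π 0 s)) + KL p (π k s) :=
    fun k s => (prox_step γ hγ0 (η k) (τ k) (hparam k)
        (fun a => Qf γ c P (V (π k)) s a) (π 0 s) (π k s) (π (k+1) s)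
        (hpol 0 s) (fun a => hπ0pos s a) (hpol k s) (hpos k s) (hpol (k+1) s)
        (fun p hp => hstep k s p hp)).2
  -- sum helpers
  have hpull : ∀ (r : ℝ) (g : S → ℝ), ∑ s, ν s * (r * g s) = r * ∑ s, ν s * g s := by
    intro r g; rw [Finset.mul_sum]; exact Finset.sum_congr rfl fun s _ => by ring
  have hconst : ∀ (r : ℝ), ∑ s, ν s * r = r := by
    intro r; rw [← Finset.sum_mul, hν.2, one_mul]
  -- the per-iteration recursion
  have hrecur : ∀ k : ℕ,
      ((∑ s, ν s * V (π (k+1)) s) - ∑ s, ν s * V πstar s)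
        + γ^(2*k+1) * (∑ s, ν s * KL (πstar s) (π (k+1) s))
      ≤ γ * ((∑ s, ν s * V (π k) s) - ∑ s, ν s * V πstar s)
        + γ^(2*k+2) * (∑ s, ν s * KL (πstar s) (π k s)) + γ^(2*k+1) * L := by
    intro k
    have hθη' : γ^(2*k+2) * η k = 1 := hθη k
    -- divided three-point identity
    have eq7' : ∀ s, ∀ p : A → ℝ, IsDist p →
        ((∑ a, Qf γ c P (V (π k)) s a * π (k+1) s a) + τ k * KL (π (k+1) s) (π 0 s))
          + γ^(2*k+2) * KL (π (k+1) s) (π k s) + γ^(2*k+2) * γ⁻¹ * KL p (π (k+1) s)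
        = ((∑ a, Qf γ c P (V (π k)) s a * p a) + τ k * KL p (π 0 s))
          + γ^(2*k+2) * KL p (π k s) := by
      intro s p hp
      have h := eq7 k s p hp
      have h2 := congrArg (fun x => γ^(2*k+2) * x) h
      simp only [mul_add, ← mul_assoc, hθη', one_mul] at h2
      exact h2
    have hθnn : (0:ℝ) ≤ γ^(2*k+2) := pow_nonneg hγ0.le _
    -- bracket bound
    have hbr : ∀ s, (∑ a, Qf γ c P (V (π k)) s a * π (k+1) s a) - V (π k) s ≤ τ k * L := by
      intro s
      have h := eq7' s (π k s) (hpol k s)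
      rw [KL_self (hpos k s), mul_zero] at h
      have hXk : V (π k) s = ∑ a, Qf γ c P (V (π k)) s a * π k s a := by
        rw [hV (π k) (hpol k) s]
        exact Finset.sum_congr rfl fun a _ => mul_comm _ _
      have hK1 : 0 ≤ KL (π (k+1) s) (π 0 s) :=
        KL_nonneg (hpol (k+1) s) (hpol 0 s) (hπ0pos s)
      have hK2 : 0 ≤ KL (π (k+1) s) (π k s) :=
        KL_nonneg (hpol (k+1) s) (hpol k s) (hpos k s)
      have hK3 : 0 ≤ KL (π k s) (π (k+1) s) :=
        KL_nonneg (hpol k s) (hpol (k+1) s) (hpos (k+1) s)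
      have hK4 : KL (π k s) (π 0 s) ≤ L := by
        rw [hπ0u s]; exact KL_uniform_le (hpol k s)
      have p1 : 0 ≤ τ k * KL (π (k+1) s) (π 0 s) := mul_nonneg (hτ0 k) hK1
      have p2 : 0 ≤ γ^(2*k+2) * KL (π (k+1) s) (π k s) := mul_nonneg hθnn hK2
      have p3 : 0 ≤ γ^(2*k+2) * γ⁻¹ * KL (π k s) (π (k+1) s) :=
        mul_nonneg (mul_nonneg hθnn (inv_nonneg.mpr hγ0.le)) hK3
      have p4 : τ k * KL (π k s) (π 0 s) ≤ τ k * L := mul_le_mul_of_nonneg_left hK4 (hτ0 k)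
      rw [hXk]
      linarith
    -- performance difference via contraction
    have hWrec := value_diff γ c P (V (π (k+1))) (V (π k)) (π (k+1)) (hV (π (k+1)) (hpol (k+1)))
    have hsup := sup_bound γ hγ0 hγ1 (π (k+1)) (hpol (k+1)) P hP ν hν
        (fun s => V (π (k+1)) s - V (π k) s)
        (fun s => (∑ a, Qf γ c P (V (π k)) s a * π (k+1) s a) - V (π k) s)
        (τ k * L) (fun s => hWrec s) hbr
    have hsup' : (∑ s, ν s * (V (π (k+1)) s - V (π k) s))
        ≤ (∑ s, ν s * ((∑ a, Qf γ c P (V (π k)) s a * π (k+1) s a) - V (π k) s))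
          + γ * (τ k * L) / (1 - γ) := hsup
    clear hsup
    rename' hsup' => hsup
    have hfd : ∑ s, ν s * (V (π (k+1)) s - V (π k) s)
        = (∑ s, ν s * V (π (k+1)) s) - ∑ s, ν s * V (π k) s := by
      simp only [mul_sub]
      rw [Finset.sum_sub_distrib]
    rw [hfd] at hsup
    -- per-state inequality against πstar, summed
    have hP1 : ∀ s,
        (∑ a, Qf γ c P (V (π k)) s a * π (k+1) s a)
          + γ^(2*k+2) * γ⁻¹ * KL (πstar s) (π (k+1) s)
        ≤ (∑ a, Qf γ c P (V (π k)) s a * πstar s a) + τ k * L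
          + γ^(2*k+2) * KL (πstar s) (π k s) := by
      intro s
      have h := eq7' s (πstar s) (hπstar s)
      have hK1 : 0 ≤ KL (π (k+1) s) (π 0 s) :=
        KL_nonneg (hpol (k+1) s) (hpol 0 s) (hπ0pos s)
      have hK2 : 0 ≤ KL (π (k+1) s) (π k s) :=
        KL_nonneg (hpol (k+1) s) (hpol k s) (hpos k s)
      have hK6 : KL (πstar s) (π 0 s) ≤ L := by
        rw [hπ0u s]; exact KL_uniform_le (hπstar s)
      have p1 : 0 ≤ τ k * KL (π (k+1) s) (π 0 s) := mul_nonneg (hτ0 k) hK1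
      have p2 : 0 ≤ γ^(2*k+2) * KL (π (k+1) s) (π k s) := mul_nonneg hθnn hK2
      have p4 : τ k * KL (πstar s) (π 0 s) ≤ τ k * L := mul_le_mul_of_nonneg_left hK6 (hτ0 k)
      linarith
    have hS1 : (∑ s, ν s * ∑ a, Qf γ c P (V (π k)) s a * π (k+1) s a)
          + γ^(2*k+2) * γ⁻¹ * (∑ s, ν s * KL (πstar s) (π (k+1) s))
        ≤ (∑ s, ν s * ∑ a, Qf γ c P (V (π k)) s a * πstar s a) + τ k * L
          + γ^(2*k+2) * (∑ s, ν s * KL (πstar s) (π k s)) := by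
      calc (∑ s, ν s * ∑ a, Qf γ c P (V (π k)) s a * π (k+1) s a)
            + γ^(2*k+2) * γ⁻¹ * (∑ s, ν s * KL (πstar s) (π (k+1) s))
          = ∑ s, ν s * ((∑ a, Qf γ c P (V (π k)) s a * π (k+1) s a)
              + γ^(2*k+2) * γ⁻¹ * KL (πstar s) (π (k+1) s)) := by
            rw [← hpull (γ^(2*k+2) * γ⁻¹) (fun s => KL (πstar s) (π (k+1) s)),
              ← Finset.sum_add_distrib]
            exact Finset.sum_congr rfl fun s _ => by ring
        _ ≤ ∑ s, ν s * ((∑ a, Qf γ c P (V (π k)) s a * πstar s a) + τ k * L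
              + γ^(2*k+2) * KL (πstar s) (π k s)) :=
            Finset.sum_le_sum fun s _ => mul_le_mul_of_nonneg_left (hP1 s) (hν.1 s)
        _ = (∑ s, ν s * ∑ a, Qf γ c P (V (π k)) s a * πstar s a) + τ k * L
              + γ^(2*k+2) * (∑ s, ν s * KL (πstar s) (π k s)) := by
            have e1 : ∀ s : S, ν s * ((∑ a, Qf γ c P (V (π k)) s a * πstar s a) + τ k * L
                + γ^(2*k+2) * KL (πstar s) (π k s))
                = ν s * (∑ a, Qf γ c P (V (π k)) s a * πstar s a) + ν s * (τ k * L)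
                  + ν s * (γ^(2*k+2) * KL (πstar s) (π k s)) := fun s => by ring
            rw [Finset.sum_congr rfl fun s _ => e1 s, Finset.sum_add_distrib,
              Finset.sum_add_distrib, hconst (τ k * L),
              hpull (γ^(2*k+2)) (fun s => KL (πstar s) (π k s))]
    -- PDL under stationary distribution
    have hS2 : ∑ s, ν s * ∑ a, Qf γ c P (V (π k)) s a * πstar s a
        = (∑ s, ν s * V πstar s) - γ * (∑ s, ν s * V πstar s)
          + γ * ∑ s, ν s * V (π k) s := by
      have h := pdl_stat γ c P ν πstar hνstat (V πstar) (hV πstar hπstar) (V (π k))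
      have hcomm : ∑ s, ν s * ∑ a, Qf γ c P (V (π k)) s a * πstar s a
          = ∑ s, ν s * ∑ a, πstar s a * Qf γ c P (V (π k)) s a :=
        Finset.sum_congr rfl fun s _ =>
          congrArg (HMul.hMul (ν s)) (Finset.sum_congr rfl fun a _ => mul_comm _ _)
      rw [hcomm, h]
      ring
    -- split the k+1 action-value average
    have hS3 : ∑ s, ν s * ∑ a, Qf γ c P (V (π k)) s a * π (k+1) s a
        = (∑ s, ν s * ((∑ a, Qf γ c P (V (π k)) s a * π (k+1) s a) - V (π k) s))
          + ∑ s, ν s * V (π k) s := by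
      rw [← Finset.sum_add_distrib]
      exact Finset.sum_congr rfl fun s _ => by ring
    -- constants
    have hS5 : τ k * L + γ * (τ k * L) / (1 - γ) = γ^(2*k+1) * L := by
      rw [hτval k]
      field_simp
      ring
    have hS6 : γ^(2*k+2) * γ⁻¹ = γ^(2*k+1) := by
      have h22 : 2*k+2 = (2*k+1)+1 := by omega
      rw [h22, pow_succ, mul_assoc, mul_inv_cancel₀ hγne, mul_one]
    rw [hS6] at hS1
    linarith
  -- main induction
  have hD0 : ∀ k, 0 ≤ ∑ s, ν s * KL (πstar s) (π k s) :=
    fun k => Finset.sum_nonneg fun s _ => mul_nonneg (hν.1 s)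
      (KL_nonneg (hπstar s) (hpol k s) (hpos k s))
  have main : ∀ k : ℕ,
      ((∑ s, ν s * V (π k) s) - ∑ s, ν s * V πstar s)
        + γ^(2*k) * (∑ s, ν s * KL (πstar s) (π k s))
      ≤ γ^k * (((∑ s, ν s * V (π 0) s) - ∑ s, ν s * V πstar s)
          + (∑ s, ν s * KL (πstar s) (π 0 s)) + L * ∑ j ∈ Finset.range k, γ^j) := by
    intro k
    induction k with
    | zero => simp
    | succ n ih =>
      have hrec := hrecur n
      have hd1 : γ^(2*n+2) * (∑ s, ν s * KL (πstar s) (π (n+1) s))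
          ≤ γ^(2*n+1) * (∑ s, ν s * KL (πstar s) (π (n+1) s)) := by
        have hle : γ^(2*n+2) ≤ γ^(2*n+1) :=
          pow_le_pow_of_le_one hγ0.le hγ1.le (by omega)
        exact mul_le_mul_of_nonneg_right hle (hD0 (n+1))
      have hd2 : γ^(2*n+2) * (∑ s, ν s * KL (πstar s) (π n s))
          ≤ γ * (γ^(2*n) * (∑ s, ν s * KL (πstar s) (π n s))) := by
        have h1 : γ^(2*n+2) = γ * γ * γ^(2*n) := by ring
        have h2 : γ * γ * γ^(2*n) ≤ γ * γ^(2*n) := by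
          have h0 : 0 ≤ γ * γ^(2*n) * (1 - γ) :=
            mul_nonneg (mul_nonneg hγ0.le (pow_nonneg hγ0.le _)) h1γ.le
          nlinarith [h0]
        have h3 := mul_le_mul_of_nonneg_right h2 (hD0 n)
        rw [h1]
        calc γ * γ * γ^(2*n) * (∑ s, ν s * KL (πstar s) (π n s))
            ≤ γ * γ^(2*n) * (∑ s, ν s * KL (πstar s) (π n s)) := h3
          _ = γ * (γ^(2*n) * (∑ s, ν s * KL (πstar s) (π n s))) := by ring
      have hmul := mul_le_mul_of_nonneg_left ih hγ0.le
      rw [Finset.sum_range_succ]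
      have q1 : γ^(n+1) * (((∑ s, ν s * V (π 0) s) - ∑ s, ν s * V πstar s)
            + (∑ s, ν s * KL (πstar s) (π 0 s))
            + L * ((∑ j ∈ Finset.range n, γ^j) + γ^n))
          = γ * (γ^n * (((∑ s, ν s * V (π 0) s) - ∑ s, ν s * V πstar s)
            + (∑ s, ν s * KL (πstar s) (π 0 s)) + L * ∑ j ∈ Finset.range n, γ^j))
            + γ^(2*n+1) * L := by ring
      have q2 : γ^(2*(n+1)) * (∑ s, ν s * KL (πstar s) (π (n+1) s))
          = γ^(2*n+2) * (∑ s, ν s * KL (πstar s) (π (n+1) s)) := by ring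
      linarith [hrec, hd1, hd2, hmul, q1, q2]
  -- conclude
  intro k hk
  have h := main k
  have hDk := hD0 k
  have hgeom : ∑ j ∈ Finset.range k, γ^j ≤ 1 / (1 - γ) := by
    have hne1 : γ ≠ 1 := ne_of_lt hγ1
    rw [geom_sum_eq hne1 k]
    have he : (γ^k - 1)/(γ - 1) = (1 - γ^k)/(1 - γ) := by
      rw [div_eq_div_iff (sub_ne_zero_of_ne hne1) h1γne]
      ring
    rw [he, div_le_div_iff₀ h1γ h1γ]
    have hgk : (0:ℝ) ≤ γ^k := pow_nonneg hγ0.le k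
    nlinarith
  have hDinit : (∑ s, ν s * KL (πstar s) (π 0 s)) ≤ L := by
    calc ∑ s, ν s * KL (πstar s) (π 0 s) ≤ ∑ s, ν s * L := by
          refine Finset.sum_le_sum fun s _ => mul_le_mul_of_nonneg_left ?_ (hν.1 s)
          rw [hπ0u s]; exact KL_uniform_le (hπstar s)
      _ = L := hconst L
  have hC : ((∑ s, ν s * V (π 0) s) - ∑ s, ν s * V πstar s)
      + (∑ s, ν s * KL (πstar s) (π 0 s)) + L * ∑ j ∈ Finset.range k, γ^j
      ≤ ((∑ s, ν s * V (π 0) s) - ∑ s, ν s * V πstar s) + 4 * L / (1 - γ) := by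
    have h1 : L * ∑ j ∈ Finset.range k, γ^j ≤ L * (1 / (1-γ)) :=
      mul_le_mul_of_nonneg_left hgeom hL0
    have h2 : L + L * (1/(1-γ)) ≤ 4 * L / (1-γ) := by
      rw [le_div_iff₀ h1γ]
      have hcl : L * (1/(1-γ)) * (1-γ) = L := by field_simp
      nlinarith [mul_nonneg hL0 hγ0.le, hcl]
    linarith
  have hγk : (0:ℝ) ≤ γ^k := pow_nonneg hγ0.le k
  have hfin := mul_le_mul_of_nonneg_left hC hγk
  have hx : γ^(2*k) * (∑ s, ν s * KL (πstar s) (π k s)) ≥ 0 :=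
    mul_nonneg (pow_nonneg hγ0.le _) hDk
  linarith
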